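/- arXiv:1406.4025 — 2 statements merged into one kernel-verified Lean document; each statement's English description precedes it below -/
import Mathlib

section
/- Let H = -d²/du² + u² be the harmonic oscillator on L²(ℝ). For every f in the domain of H, ‖u²f‖_{L²(ℝ)} ≤ √5 · ‖Hf‖_{L²(ℝ)}. -/
/-!
Write `D` for `d/du` and `X` for multiplication by `u`: `D` is skew-adjoint, `X` is symmetric and
`DX - XD = 1`. Hence `‖f‖² = -2⟪Df, Xf⟫ ≤ ‖Df‖² + ‖Xf‖² = ⟪f, Hf⟫ ≤ ‖f‖ ‖Hf‖`, so `‖f‖ ≤ ‖Hf‖`.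
Commuting `D` past `X` twice gives `⟪D²f, X²f⟫ = ‖f‖² - ‖XDf‖²`, so expanding `‖-D²f + X²f‖²`
yields `‖X²f‖² ≤ ‖Hf‖² + 2‖f‖² ≤ 3‖Hf‖²`.

Only these relations enter, so `D` and `X` are taken abstractly, on a space `E` whose inner
products are computed through a linear map `T` into a real inner product space (for Schwartz
space, its embedding into `L²`).
-/

open MeasureTheory

open scoped RealInnerProductSpace SchwartzMap

structure IsCCRPair {E G : Type*} [AddCommGroup E] [Module ℝ E] [NormedAddCommGroup G]
    [InnerProductSpace ℝ G] (T : E →ₗ[ℝ] G) (D X : E →ₗ[ℝ] E) : Prop where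
  skew_D : ∀ u v, ⟪T u, T (D v)⟫ = -⟪T (D u), T v⟫
  symm_X : ∀ u v, ⟪T (X u), T v⟫ = ⟪T u, T (X v)⟫
  D_X : ∀ u, D (X u) = u + X (D u)

section HarmonicOscillator

variable {E G : Type*} [AddCommGroup E] [Module ℝ E] [NormedAddCommGroup G]
  [InnerProductSpace ℝ G] {T : E →ₗ[ℝ] G} {D X : E →ₗ[ℝ] E}

def harmonicOscillator (D X : E →ₗ[ℝ] E) : E →ₗ[ℝ] E := -(D ∘ₗ D) + X ∘ₗ X

@[simp]
theorem harmonicOscillator_apply (u : E) : harmonicOscillator D X u = -D (D u) + X (X u) := rfl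

namespace IsCCRPair

theorem norm_sq_eq_neg_two_mul_inner (h : IsCCRPair T D X) (u : E) :
    ‖T u‖ ^ 2 = -2 * ⟪T (D u), T (X u)⟫ := by
  have hu : T u = T (D (X u)) - T (X (D u)) := by rw [h.D_X, map_add]; abel
  rw [← real_inner_self_eq_norm_sq]
  nth_rw 1 [hu]
  rw [inner_sub_left, real_inner_comm, h.skew_D, h.symm_X]
  ring

theorem norm_sq_le_norm_D_sq_add_norm_X_sq (h : IsCCRPair T D X) (u : E) :
    ‖T u‖ ^ 2 ≤ ‖T (D u)‖ ^ 2 + ‖T (X u)‖ ^ 2 := by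
  rw [h.norm_sq_eq_neg_two_mul_inner]
  nlinarith [norm_add_sq_real (T (D u)) (T (X u)), sq_nonneg ‖T (D u) + T (X u)‖]

theorem inner_harmonicOscillator (h : IsCCRPair T D X) (u : E) :
    ⟪T u, T (harmonicOscillator D X u)⟫ = ‖T (D u)‖ ^ 2 + ‖T (X u)‖ ^ 2 := by
  rw [harmonicOscillator_apply, map_add, map_neg, inner_add_right, inner_neg_right, h.skew_D,
    ← h.symm_X, real_inner_self_eq_norm_sq, real_inner_self_eq_norm_sq, neg_neg]

theorem norm_le_norm_harmonicOscillator (h : IsCCRPair T D X) (u : E) :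
    ‖T u‖ ≤ ‖T (harmonicOscillator D X u)‖ := by
  have hsq : ‖T u‖ ^ 2 ≤ ‖T u‖ * ‖T (harmonicOscillator D X u)‖ :=
    calc ‖T u‖ ^ 2 ≤ ⟪T u, T (harmonicOscillator D X u)⟫ :=
          h.inner_harmonicOscillator u ▸ h.norm_sq_le_norm_D_sq_add_norm_X_sq u
      _ ≤ _ := real_inner_le_norm _ _
  nlinarith [norm_nonneg (T u), norm_nonneg (T (harmonicOscillator D X u))]

theorem inner_DD_XX (h : IsCCRPair T D X) (u : E) :
    ⟪T (D (D u)), T (X (X u))⟫ = ‖T u‖ ^ 2 - ‖T (X (D u))‖ ^ 2 := by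
  have hDXX : D (X (X u)) = (2 : ℝ) • X u + X (X (D u)) := by
    rw [h.D_X, h.D_X, map_add, two_smul]; abel
  rw [real_inner_comm, h.skew_D, hDXX, map_add, map_smul, inner_add_left, real_inner_smul_left,
    h.symm_X (X (D u)), real_inner_self_eq_norm_sq, real_inner_comm,
    h.norm_sq_eq_neg_two_mul_inner u]
  ring

theorem norm_XX_sq_le (h : IsCCRPair T D X) (u : E) :
    ‖T (X (X u))‖ ^ 2 ≤ 3 * ‖T (harmonicOscillator D X u)‖ ^ 2 := by
  have hexp : ‖T (harmonicOscillator D X u)‖ ^ 2 =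
      ‖T (D (D u))‖ ^ 2 - 2 * ⟪T (D (D u)), T (X (X u))⟫ + ‖T (X (X u))‖ ^ 2 := by
    rw [harmonicOscillator_apply, map_add, map_neg, neg_add_eq_sub, norm_sub_sq_real,
      real_inner_comm]
    ring
  have hu := h.norm_le_norm_harmonicOscillator u
  rw [h.inner_DD_XX] at hexp
  nlinarith [norm_nonneg (T u)]

end IsCCRPair

end HarmonicOscillator

namespace SchwartzMap

variable {F : Type*} [NormedAddCommGroup F] [InnerProductSpace ℝ F]

theorem real_inner_toL2_toL2_eq {H : Type*} [NormedAddCommGroup H] [NormedSpace ℝ H]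
    [MeasurableSpace H] [BorelSpace H] [SecondCountableTopology H] (f g : 𝓢(H, F))
    (μ : Measure H := by volume_tac) [μ.HasTemperateGrowth] :
    ⟪f.toLp 2 μ, g.toLp 2 μ⟫ = ∫ x, ⟪f x, g x⟫ ∂μ := by
  apply integral_congr_ae
  filter_upwards [f.coeFn_toLp 2 μ, g.coeFn_toLp 2 μ] with _ hf hg
  rw [hf, hg]

theorem eLpNorm_eq_ofReal_norm_toLp {E : Type*} [NormedAddCommGroup E] [NormedSpace ℝ E]
    [MeasurableSpace E] [BorelSpace E] [SecondCountableTopology E] {p : ENNReal}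
    {μ : Measure E} [μ.HasTemperateGrowth] (f : 𝓢(E, F)) :
    eLpNorm f p μ = ENNReal.ofReal ‖f.toLp p μ‖ := by
  rw [norm_toLp, ENNReal.ofReal_toReal (f.eLpNorm_lt_top p μ).ne]

theorem deriv_smul_id (f : 𝓢(ℝ, F)) (x : ℝ) :
    deriv (fun y => y • f y) x = f x + x • deriv f x := by
  rw [deriv_fun_smul differentiableAt_fun_id f.differentiableAt, deriv_id'', one_smul, add_comm]

theorem isCCRPair_derivCLM_smulLeftCLM_id :
    IsCCRPair (toLpCLM ℝ F 2 volume).toLinearMap (derivCLM ℝ F).toLinearMap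
      (smulLeftCLM F (fun x : ℝ => x)).toLinearMap where
  skew_D u v := by
    simp only [ContinuousLinearMap.coe_coe, toLpCLM_apply, real_inner_toL2_toL2_eq,
      derivCLM_apply]
    exact integral_bilinear_deriv_right_eq_neg_left u v (innerSL ℝ)
  symm_X u v := by
    simp only [ContinuousLinearMap.coe_coe, toLpCLM_apply, real_inner_toL2_toL2_eq,
      smulLeftCLM_apply_apply Function.HasTemperateGrowth.id', real_inner_smul_left,
      real_inner_smul_right]
  D_X u := by
    ext x
    simp only [ContinuousLinearMap.coe_coe, derivCLM_apply, add_apply,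
      smulLeftCLM_apply Function.HasTemperateGrowth.id', deriv_smul_id]

end SchwartzMap

open SchwartzMap in
/-- For the harmonic oscillator `H = -d²/du² + u²` on `L²(ℝ)` and `f` Schwartz (a core of
the domain of `H`), `‖u² f‖₂ ≤ √5 ‖H f‖₂`. -/
theorem stmt0 (f : SchwartzMap ℝ ℂ) :
    eLpNorm (fun u : ℝ => (u : ℂ) ^ 2 * f u) 2 volume ≤
      ENNReal.ofReal (Real.sqrt 5) *
        eLpNorm (fun u : ℝ =>
          -(deriv (deriv (fun v : ℝ => f v)) u) + (u : ℂ) ^ 2 * f u) 2 volume := by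
  set D := derivCLM ℝ ℂ
  set X := smulLeftCLM ℂ (fun x : ℝ => x)
  have hXX : (fun u : ℝ => (u : ℂ) ^ 2 * f u) = X (X f) := by
    ext u
    simp only [X, smulLeftCLM_apply_apply Function.HasTemperateGrowth.id', Complex.real_smul]
    ring
  have hH : (fun u : ℝ => -(deriv (deriv (fun v : ℝ => f v)) u) + (u : ℂ) ^ 2 * f u) =
      ⇑(-D (D f) + X (X f)) := by
    ext u
    rw [add_apply, neg_apply, ← congrFun hXX u]
    rfl
  have hbound : ‖(X (X f)).toLp 2‖ ^ 2 ≤ 3 * ‖(-D (D f) + X (X f)).toLp 2‖ ^ 2 :=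
    isCCRPair_derivCLM_smulLeftCLM_id.norm_XX_sq_le f
  rw [hXX, hH, eLpNorm_eq_ofReal_norm_toLp, eLpNorm_eq_ofReal_norm_toLp,
    ← ENNReal.ofReal_mul (Real.sqrt_nonneg 5)]
  refine ENNReal.ofReal_le_ofReal ((pow_le_pow_iff_left₀ (norm_nonneg _) (by positivity)
    two_ne_zero).mp ?_)
  rw [mul_pow, Real.sq_sqrt (by norm_num)]
  linarith [sq_nonneg ‖(-D (D f) + X (X f)).toLp 2‖]
end

section
/- Define ρ̃ on (ℝ^{d₁}×ℝ^{d₂})² by ρ̃(x,y) = |x'-y'| + |x''-y''|/(|x'|+|y'|) if |x''-y''|^{1/2} ≤ |x'|+|y'|, and ρ̃(x,y) = |x'-y'| + |x''-y''|^{1/2} otherwise. Then the Lebesgue measure of the ball B(x,r) = {y : ρ̃(x,y) < r} is comparable (with constants depending only on d₁,d₂) to r^{d₁+d₂} · max{r, |x'|}^{d₂}, for all x and all r > 0. -/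
open MeasureTheory

/-- The Grushin quasi-distance on `ℝ^{d₁} × ℝ^{d₂}`. -/
noncomputable def grushinDist {d₁ d₂ : ℕ}
    (x y : EuclideanSpace ℝ (Fin d₁) × EuclideanSpace ℝ (Fin d₂)) : ℝ :=
  if Real.sqrt ‖x.2 - y.2‖ ≤ ‖x.1‖ + ‖y.1‖ then
    ‖x.1 - y.1‖ + ‖x.2 - y.2‖ / (‖x.1‖ + ‖y.1‖)
  else
    ‖x.1 - y.1‖ + Real.sqrt ‖x.2 - y.2‖

/-!
The ball `B(x, r)` is squeezed between two boxes
`B(x', r/2) × B(x'', r M / 4) ⊆ B(x, r) ⊆ B(x', r) × B(x'', 3 r M)` with `M = max r |x'|`,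
whose volumes are `∼ r^{d₁} (r M)^{d₂}`. The second coordinate contributes `|x'' - y''| / S` or
`|x'' - y''|^{1/2}` with `S = |x'| + |y'|`; either way it is `≲ r` exactly when
`|x'' - y''| ≲ r max r S`, and `S ≤ 2|x'| + r` on the ball.
-/

open Metric Module

noncomputable def grushinVertDist (b S : ℝ) : ℝ :=
  if Real.sqrt b ≤ S then b / S else Real.sqrt b

theorem grushinDist_eq_add {d₁ d₂ : ℕ}
    (x y : EuclideanSpace ℝ (Fin d₁) × EuclideanSpace ℝ (Fin d₂)) :
    grushinDist x y = ‖x.1 - y.1‖ + grushinVertDist ‖x.2 - y.2‖ (‖x.1‖ + ‖y.1‖) := by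
  rw [grushinDist, grushinVertDist, add_ite]

theorem grushinVertDist_nonneg {b : ℝ} (hb : 0 ≤ b) (S : ℝ) : 0 ≤ grushinVertDist b S := by
  unfold grushinVertDist
  split_ifs with hS
  · exact div_nonneg hb ((Real.sqrt_nonneg b).trans hS)
  · exact Real.sqrt_nonneg b

theorem grushinVertDist_le_half {b p S r : ℝ} (hb : 0 ≤ b) (hp : 0 ≤ p) (hpS : p ≤ S)
    (hr : 0 < r) (h : b < r * max r p / 4) : grushinVertDist b S ≤ r / 2 := by
  have hsq : Real.sqrt b * Real.sqrt b = b := Real.mul_self_sqrt hb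
  rcases le_total p r with hpr | hrp
  · rw [max_eq_left hpr] at h
    have hsqrt : Real.sqrt b < r / 2 := (Real.sqrt_lt' (by positivity)).mpr (by nlinarith)
    unfold grushinVertDist
    split_ifs with hS
    · rcases (hp.trans hpS).eq_or_lt with hS0 | hS0
      · rw [← hS0, div_zero]
        positivity
      · rw [div_le_iff₀ hS0]
        nlinarith [Real.sqrt_nonneg b]
    · exact hsqrt.le
  · rw [max_eq_right hrp] at h
    unfold grushinVertDist
    split_ifs with hS
    · rw [div_le_iff₀ (by linarith)]
      nlinarith
    · -- `√b > S ≥ p` contradicts `b < r p / 4 ≤ p² / 4`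
      nlinarith [Real.sqrt_nonneg b]

theorem lt_mul_max_of_grushinVertDist_lt {b S r : ℝ} (hr : 0 < r)
    (h : grushinVertDist b S < r) : b < r * max r S := by
  have hr2 : r * r ≤ r * max r S := mul_le_mul_of_nonneg_left (le_max_left _ _) hr.le
  rcases lt_or_ge b 0 with hb | hb
  · nlinarith
  have hsq : Real.sqrt b * Real.sqrt b = b := Real.mul_self_sqrt hb
  unfold grushinVertDist at h
  split_ifs at h with hS
  · rcases (Real.sqrt_nonneg b).trans hS |>.eq_or_lt with hS0 | hS0
    · nlinarith [Real.sqrt_nonneg b]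
    · rw [div_lt_iff₀ hS0] at h
      nlinarith [le_max_right r S]
  · nlinarith [Real.sqrt_nonneg b]

section Balls

variable {d₁ d₂ : ℕ} (x : EuclideanSpace ℝ (Fin d₁) × EuclideanSpace ℝ (Fin d₂)) {r : ℝ}

theorem ball_prod_ball_subset_grushinBall (hr : 0 < r) :
    ball x.1 (r / 2) ×ˢ ball x.2 (r * max r ‖x.1‖ / 4) ⊆ {y | grushinDist x y < r} := by
  rintro y ⟨hy₁, hy₂⟩
  rw [mem_ball, dist_comm, dist_eq_norm] at hy₁ hy₂
  have hvert := grushinVertDist_le_half (norm_nonneg _) (norm_nonneg _)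
    (le_add_of_nonneg_right (norm_nonneg y.1)) hr hy₂
  rw [Set.mem_ofPred_eq, grushinDist_eq_add]
  linarith

theorem grushinBall_subset_ball_prod_ball (hr : 0 < r) :
    {y | grushinDist x y < r} ⊆ ball x.1 r ×ˢ ball x.2 (3 * (r * max r ‖x.1‖)) := by
  intro y hy
  rw [Set.mem_ofPred_eq, grushinDist_eq_add] at hy
  have h₁ : ‖x.1 - y.1‖ < r := by
    linarith [grushinVertDist_nonneg (norm_nonneg (x.2 - y.2)) (‖x.1‖ + ‖y.1‖)]
  have h₂ := lt_mul_max_of_grushinVertDist_lt hr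
    (lt_of_le_of_lt (le_add_of_nonneg_left (norm_nonneg _)) hy)
  have hS : max r (‖x.1‖ + ‖y.1‖) ≤ 3 * max r ‖x.1‖ := by
    have hy₁ := norm_le_norm_add_norm_sub x.1 y.1
    exact max_le (by linarith [le_max_left r ‖x.1‖, le_max_right r ‖x.1‖])
      (by linarith [le_max_left r ‖x.1‖, le_max_right r ‖x.1‖])
  refine ⟨?_, ?_⟩ <;> rw [mem_ball, dist_comm, dist_eq_norm]
  · exact h₁
  · nlinarith

end Balls

theorem addHaar_ball_prod_ball_toReal {E F : Type*}
    [NormedAddCommGroup E] [NormedSpace ℝ E] [FiniteDimensional ℝ E] [MeasurableSpace E]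
    [BorelSpace E] [NormedAddCommGroup F] [NormedSpace ℝ F] [FiniteDimensional ℝ F]
    [MeasurableSpace F] [BorelSpace F] (μ : Measure E) (ν : Measure F)
    [μ.IsAddHaarMeasure] [ν.IsAddHaarMeasure] (a : E) (b : F) {s t : ℝ} (hs : 0 < s)
    (ht : 0 < t) :
    (μ.prod ν (ball a s ×ˢ ball b t)).toReal =
      s ^ finrank ℝ E * t ^ finrank ℝ F * ((μ (ball 0 1)).toReal * (ν (ball 0 1)).toReal) := by
  rw [Measure.prod_prod, Measure.addHaar_ball_of_pos μ a hs, Measure.addHaar_ball_of_pos ν b ht]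
  simp only [ENNReal.toReal_mul, ENNReal.toReal_ofReal (pow_nonneg hs.le _),
    ENNReal.toReal_ofReal (pow_nonneg ht.le _)]
  ring

theorem stmt5_general (d₁ d₂ : ℕ) :
    ∃ c C : ℝ, 0 < c ∧ 0 < C ∧
      ∀ (x : EuclideanSpace ℝ (Fin d₁) × EuclideanSpace ℝ (Fin d₂)) (r : ℝ), 0 < r →
        c * (r ^ (d₁ + d₂) * max r ‖x.1‖ ^ d₂) ≤
            (volume {y | grushinDist x y < r}).toReal ∧
          (volume {y | grushinDist x y < r}).toReal ≤
            C * (r ^ (d₁ + d₂) * max r ‖x.1‖ ^ d₂) := by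
  set v := (volume (ball (0 : EuclideanSpace ℝ (Fin d₁)) 1)).toReal *
    (volume (ball (0 : EuclideanSpace ℝ (Fin d₂)) 1)).toReal with hv_def
  have hv : 0 < v := mul_pos
    (ENNReal.toReal_pos (measure_ball_pos _ _ one_pos).ne' measure_ball_lt_top.ne)
    (ENNReal.toReal_pos (measure_ball_pos _ _ one_pos).ne' measure_ball_lt_top.ne)
  refine ⟨v / (2 ^ d₁ * 4 ^ d₂), 3 ^ d₂ * v, by positivity, by positivity, fun x r hr => ?_⟩
  have hM : 0 < max r ‖x.1‖ := lt_max_of_lt_left hr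
  have hfin : volume {y | grushinDist x y < r} ≠ ⊤ :=
    ((measure_mono (grushinBall_subset_ball_prod_ball x hr)).trans_lt
      (isBounded_ball.prod isBounded_ball).measure_lt_top).ne
  constructor
  · calc _ = (volume (ball x.1 (r / 2) ×ˢ ball x.2 (r * max r ‖x.1‖ / 4))).toReal := by
          rw [Measure.volume_eq_prod, addHaar_ball_prod_ball_toReal _ _ _ _ (by positivity)
            (by positivity), finrank_euclideanSpace_fin, finrank_euclideanSpace_fin, hv_def,
            div_pow, div_pow, pow_add, mul_pow]
          field_simp
      _ ≤ _ := ENNReal.toReal_mono hfin (measure_mono (ball_prod_ball_subset_grushinBall x hr))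
  · calc _ ≤ (volume (ball x.1 r ×ˢ ball x.2 (3 * (r * max r ‖x.1‖)))).toReal :=
          ENNReal.toReal_mono (isBounded_ball.prod isBounded_ball).measure_lt_top.ne
            (measure_mono (grushinBall_subset_ball_prod_ball x hr))
      _ = _ := by
          rw [Measure.volume_eq_prod, addHaar_ball_prod_ball_toReal _ _ _ _ hr (by positivity),
            finrank_euclideanSpace_fin, finrank_euclideanSpace_fin]
          ring

/-- The Lebesgue volume of Grushin balls: `|B(x,r)| ∼ r^{d₁+d₂} max{r,|x'|}^{d₂}`. -/
theorem stmt5 (d₁ d₂ : ℕ) (hd₁ : 0 < d₁) (hd₂ : 0 < d₂) :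
    ∃ c C : ℝ, 0 < c ∧ 0 < C ∧
      ∀ (x : EuclideanSpace ℝ (Fin d₁) × EuclideanSpace ℝ (Fin d₂)) (r : ℝ), 0 < r →
        c * (r ^ (d₁ + d₂) * max r ‖x.1‖ ^ d₂) ≤
            (volume {y | grushinDist x y < r}).toReal ∧
          (volume {y | grushinDist x y < r}).toReal ≤
            C * (r ^ (d₁ + d₂) * max r ‖x.1‖ ^ d₂) :=
  stmt5_general d₁ d₂
end
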